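/- Let S be a division ring, σ an injective endomorphism of S, and f = Σ_{i=0}^{m} dᵢtⁱ ∈ S[t;σ] monic of degree m ≥ 2. Then t is left-invertible in the Petit algebra S_f (i.e., there exists g ∈ S_f with g ∘ t = 1) if and only if d₀ is invertible in S, equivalently d₀ ≠ 0. -/

import Mathlib

/-! If `g t = q f + 1`, comparing constant terms (multiplicative because `δ = 0`) gives
`0 = q₀ d₀ + 1`, so `d₀ ≠ 0`. Conversely, writing `f = d₀ + h t` with `deg h < m`, the element
`g = -d₀⁻¹ h` has degree `< m` and satisfies `g t = -d₀⁻¹ f + 1`, so `g ∘ t = 1` by uniqueness of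
the remainder. Uniqueness holds because no nonzero left multiple `u f` of the monic `f` has degree
`< m`: writing `u = u₀ + h t` and `t f = w t`, where `w` is again monic of degree `m`, the
coefficients of `u f` above degree `m` are those of `(h w) t`, so induction on `deg u` gives
`h = 0`, and then the coefficient of `tᵐ` gives `u₀ = 0`. -/

/-- An abstract presentation of the skew polynomial ring `S[t;σ,δ]`:
a ring `R` together with an embedding of `S`, a variable `t` satisfying the
commutation rule `t·a = σ(a)·t + δ(a)`, such that the `t^i` form a basis of `R`
as a left `S`-module (encoded by the coefficient equivalence). -/
structure SkewPolyRing (S : Type*) (R : Type*) [Ring S] [Ring R]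
    (σ : S →+* S) (δ : S →+ S) : Type _ where
  ι : S →+* R
  t : R
  t_comm : ∀ a : S, t * ι a = ι (σ a) * t + ι (δ a)
  coeff : R ≃+ (ℕ →₀ S)
  coeff_symm : ∀ p : ℕ →₀ S, coeff.symm p = p.sum fun i a => ι a * t ^ i

namespace SkewPolyRing

variable {S R : Type*} [Ring S] [Ring R] {σ : S →+* S} {δ : S →+ S}

/-- `g` has degree `< m`. -/
def degLT (P : SkewPolyRing S R σ δ) (g : R) (m : ℕ) : Prop :=
  ∀ i, m ≤ i → P.coeff g i = 0

/-- The degree of a skew polynomial (with `deg 0 = 0` by convention). -/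
noncomputable def deg (P : SkewPolyRing S R σ δ) (g : R) : ℕ :=
  (P.coeff g).support.sup id

/-- `f` is monic of degree `m`. -/
def MonicDeg (P : SkewPolyRing S R σ δ) (f : R) (m : ℕ) : Prop :=
  P.coeff f m = 1 ∧ ∀ i, m < i → P.coeff f i = 0

/-- `modr` computes a remainder of right division by `f`. -/
def IsModr (P : SkewPolyRing S R σ δ) (f : R) (m : ℕ) (modr : R → R) : Prop :=
  ∀ g : R, P.degLT (modr g) m ∧ ∃ q : R, g = q * f + modr g

end SkewPolyRing

namespace SkewPolyRing

section

variable {S R : Type*} [Ring S] [Ring R] {σ : S →+* S} {δ : S →+ S} (P : SkewPolyRing S R σ δ)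

theorem eq_sum_coeff (g : R) : g = (P.coeff g).sum fun i a => P.ι a * P.t ^ i := by
  rw [← P.coeff_symm, AddEquiv.symm_apply_apply]

theorem coeff_eq_of_eq_sum {g : R} {p : ℕ →₀ S} (h : g = p.sum fun i a => P.ι a * P.t ^ i) :
    P.coeff g = p := by
  rw [h, ← P.coeff_symm, AddEquiv.apply_symm_apply]

theorem coeff_ι_mul_t_pow (a : S) (k : ℕ) : P.coeff (P.ι a * P.t ^ k) = Finsupp.single k a :=
  P.coeff_eq_of_eq_sum (by rw [Finsupp.sum_single_index (by simp)])

theorem coeff_ι (a : S) : P.coeff (P.ι a) = Finsupp.single 0 a := by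
  simpa using P.coeff_ι_mul_t_pow a 0

theorem coeff_one : P.coeff 1 = Finsupp.single 0 1 := by
  simpa using P.coeff_ι 1

theorem coeff_ι_mul (a : S) (v : R) :
    P.coeff (P.ι a * v) = (P.coeff v).mapRange (a * ·) (mul_zero a) := by
  refine P.coeff_eq_of_eq_sum ?_
  conv_lhs => rw [P.eq_sum_coeff v]
  rw [Finsupp.sum_mapRange_index (by simp), Finsupp.mul_sum]
  simp only [← mul_assoc, ← map_mul]

theorem coeff_mul_t (g : R) : P.coeff (g * P.t) = (P.coeff g).mapDomain Nat.succ := by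
  refine P.coeff_eq_of_eq_sum ?_
  conv_lhs => rw [P.eq_sum_coeff g]
  rw [Finsupp.sum_mapDomain_index (by simp) (by simp [add_mul]), Finsupp.sum_mul]
  simp only [mul_assoc, pow_succ]

theorem coeff_mul_t_zero (g : R) : P.coeff (g * P.t) 0 = 0 := by
  rw [coeff_mul_t, Finsupp.mapDomain_of_notMem_range]
  simp

theorem coeff_mul_t_succ (g : R) (k : ℕ) : P.coeff (g * P.t) (k + 1) = P.coeff g k := by
  rw [coeff_mul_t, Finsupp.mapDomain_apply Nat.succ_injective]

theorem exists_eq_ι_add_mul_t (g : R) :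
    ∃ h, g = P.ι (P.coeff g 0) + h * P.t ∧ ∀ k, P.coeff h k = P.coeff g (k + 1) := by
  refine ⟨P.coeff.symm ((P.coeff g).comapDomain Nat.succ Nat.succ_injective.injOn), ?_,
    fun k => by simp [Finsupp.comapDomain_apply]⟩
  apply P.coeff.injective
  ext (_ | k) <;> simp [coeff_ι, coeff_mul_t_zero, coeff_mul_t_succ, Finsupp.comapDomain_apply]

theorem exists_degLT (g : R) : ∃ n, P.degLT g n := by
  refine ⟨(P.coeff g).support.sup id + 1, fun i hi => Finsupp.notMem_support_iff.1 fun hmem => ?_⟩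
  have := Finset.le_sup (f := id) hmem
  simp only [id] at this
  omega

theorem eq_zero_of_degLT_zero {g : R} (hg : P.degLT g 0) : g = 0 :=
  P.coeff.injective (by ext i; simp [hg i (Nat.zero_le i)])

theorem degLT_sub {g h : R} {m : ℕ} (hg : P.degLT g m) (hh : P.degLT h m) :
    P.degLT (g - h) m := fun i hi => by
  rw [map_sub, Finsupp.sub_apply, hg i hi, hh i hi, sub_zero]

end

section

variable {S R : Type*} [Ring S] [Ring R] {σ : S →+* S} (P : SkewPolyRing S R σ 0)

theorem exists_t_mul_eq (v : R) :
    ∃ w, P.t * v = w * P.t ∧ ∀ i, P.coeff w i = σ (P.coeff v i) := by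
  refine ⟨P.coeff.symm ((P.coeff v).mapRange σ (map_zero σ)), ?_, fun i => by simp⟩
  rw [P.coeff_symm, Finsupp.sum_mapRange_index (by simp), Finsupp.sum_mul]
  conv_lhs => rw [P.eq_sum_coeff v]
  rw [Finsupp.mul_sum]
  refine Finsupp.sum_congr fun i _ => ?_
  rw [← mul_assoc, P.t_comm]
  simp only [AddMonoidHom.zero_apply, map_zero, add_zero, mul_assoc, pow_mul_comm']

theorem coeff_mul_zero (u v : R) : P.coeff (u * v) 0 = P.coeff u 0 * P.coeff v 0 := by
  obtain ⟨h, hu, -⟩ := P.exists_eq_ι_add_mul_t u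
  obtain ⟨w, hw, -⟩ := P.exists_t_mul_eq v
  have huv : u * v = P.ι (P.coeff u 0) * v + h * w * P.t := by
    conv_lhs => rw [hu]
    rw [add_mul, mul_assoc h, hw, mul_assoc]
  rw [huv, map_add, Finsupp.add_apply, coeff_ι_mul, Finsupp.mapRange_apply, coeff_mul_t_zero,
    add_zero]

theorem eq_zero_of_degLT_mul_monic {f u : R} {m : ℕ} (hf : P.MonicDeg f m)
    (hu : P.degLT (u * f) m) : u = 0 := by
  obtain ⟨n, hn⟩ := P.exists_degLT u
  induction n generalizing u f with
  | zero => exact P.eq_zero_of_degLT_zero hn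
  | succ n ih =>
    obtain ⟨h, hu_eq, hh⟩ := P.exists_eq_ι_add_mul_t u
    obtain ⟨w, hw, hwf⟩ := P.exists_t_mul_eq f
    have hw_monic : P.MonicDeg w m :=
      ⟨by rw [hwf, hf.1, map_one], fun i hi => by rw [hwf, hf.2 i hi, map_zero]⟩
    have huf : u * f = P.ι (P.coeff u 0) * f + h * w * P.t := by
      conv_lhs => rw [hu_eq]
      rw [add_mul, mul_assoc h, hw, mul_assoc]
    have hh0 : h = 0 := by
      refine ih hw_monic (fun i hi => ?_) (fun i hi => by rw [hh]; exact hn _ (by omega))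
      have := hu (i + 1) (by omega)
      rwa [huf, map_add P.coeff, Finsupp.add_apply, coeff_ι_mul, Finsupp.mapRange_apply,
        hf.2 _ (by omega), mul_zero, zero_add, coeff_mul_t_succ] at this
    have hu0 : P.coeff u 0 = 0 := by
      have := hu m le_rfl
      rwa [huf, hh0, zero_mul, zero_mul, add_zero, coeff_ι_mul, Finsupp.mapRange_apply, hf.1,
        mul_one] at this
    rw [hu_eq, hu0, hh0, map_zero, zero_mul, add_zero]

theorem modr_eq_of_eq_mul_add {f g q r : R} {m : ℕ} {modr : R → R} (hf : P.MonicDeg f m)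
    (hmodr : P.IsModr f m modr) (hr : P.degLT r m) (hg : g = q * f + r) : modr g = r := by
  obtain ⟨hdeg, q', hq'⟩ := hmodr g
  have hdiff : (q - q') * f = modr g - r := by
    rw [sub_mul, sub_eq_sub_iff_add_eq_add, ← hg, add_comm]
    exact hq'
  have hq : q - q' = 0 := P.eq_zero_of_degLT_mul_monic hf (hdiff ▸ P.degLT_sub hdeg hr)
  rw [hq, zero_mul] at hdiff
  exact sub_eq_zero.1 hdiff.symm

end

end SkewPolyRing

theorem petit_t_left_invertible_iff_general {S R : Type*} [DivisionRing S] [Ring R]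
    (σ : S →+* S)
    (P : SkewPolyRing S R σ 0) (f : R) (m : ℕ) (hm : 2 ≤ m)
    (hf : P.MonicDeg f m) (modr : R → R) (hmodr : P.IsModr f m modr) :
    ((∃ g : R, P.degLT g m ∧ modr (g * P.t) = 1) ↔ IsUnit (P.coeff f 0)) ∧
    (IsUnit (P.coeff f 0) ↔ P.coeff f 0 ≠ 0) := by
  refine ⟨⟨?_, fun hd => ?_⟩, isUnit_iff_ne_zero⟩
  · rintro ⟨g, -, hg⟩
    obtain ⟨-, q, hq⟩ := hmodr (g * P.t)
    rw [hg] at hq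
    have h0 := congrArg (P.coeff · 0) hq
    simp only [P.coeff_mul_t_zero, map_add, Finsupp.add_apply, P.coeff_mul_zero, P.coeff_one,
      Finsupp.single_eq_same] at h0
    refine isUnit_iff_ne_zero.2 fun hd0 => ?_
    rw [hd0, mul_zero, zero_add] at h0
    exact zero_ne_one h0
  · obtain ⟨h, hfh, hh⟩ := P.exists_eq_ι_add_mul_t f
    set d₀ := P.coeff f 0
    refine ⟨-(P.ι d₀⁻¹ * h), fun i hi => ?_,
      P.modr_eq_of_eq_mul_add (q := -P.ι d₀⁻¹) hf hmodr (fun i hi => ?_) ?_⟩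
    · rw [map_neg, Finsupp.neg_apply, P.coeff_ι_mul, Finsupp.mapRange_apply, hh,
        hf.2 _ (by omega), mul_zero, neg_zero]
    · rw [P.coeff_one, Finsupp.single_eq_of_ne (by omega)]
    · conv_rhs => rw [hfh]
      rw [mul_add, neg_mul (P.ι d₀⁻¹) (P.ι d₀), ← map_mul, inv_mul_cancel₀ hd.ne_zero, map_one]
      noncomm_ring

/-- Let `S` be a division ring, `σ` an injective endomorphism of `S`, and
`f = Σ dᵢ tⁱ ∈ S[t;σ]` monic of degree `m ≥ 2`.  Then `t` is left-invertible in the Petit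
algebra `S_f` (there is `g ∈ S_f` with `g ∘ t = 1`) if and only if `d₀` is invertible in
`S`, equivalently `d₀ ≠ 0`. -/
theorem petit_t_left_invertible_iff {S R : Type*} [DivisionRing S] [Ring R]
    (σ : S →+* S) (hσ : Function.Injective σ)
    (P : SkewPolyRing S R σ 0) (f : R) (m : ℕ) (hm : 2 ≤ m)
    (hf : P.MonicDeg f m) (modr : R → R) (hmodr : P.IsModr f m modr) :
    ((∃ g : R, P.degLT g m ∧ modr (g * P.t) = 1) ↔ IsUnit (P.coeff f 0)) ∧
    (IsUnit (P.coeff f 0) ↔ P.coeff f 0 ≠ 0) :=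
  petit_t_left_invertible_iff_general σ P f m hm hf modr hmodr
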